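/- arXiv:2307.04614 — 4 statements merged into one kernel-verified Lean document; each statement's English description precedes it below -/
import Mathlib

section
/- Let (Ω, F, ℙ) be a probability space, T > 0, B ∈ ℝ^{n×m}, and let Φ : {(t,s) : 0 ≤ s ≤ t ≤ T} × Ω → ℝ^{n×n} be jointly measurable with Φ(τ) := Φ(τ,0) and with all Bochner integrals below existing. Assume the weak semigroup property in second moments: E[Φ(t,s) B Bᵀ Φ(t,s)ᵀ] = E[Φ(t−s) B Bᵀ Φ(t−s)ᵀ] for all 0 ≤ s ≤ t ≤ T. Let u : [0,T] → ℝ^m be a deterministic square-integrable control and set x_u(t,ω) := ∫₀ᵗ Φ(t,s,ω) B u(s) ds. Define P_{u,T} := E[∫₀ᵀ Φ(s) B Bᵀ Φ(s)ᵀ ds]. Then for every w ∈ ℝ^n and every t ∈ [0,T], E[⟨x_u(t), w⟩²] ≤ (wᵀ P_{u,T} w) · ∫₀ᵀ ‖u(s)‖₂² ds. -/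
/-!
Pathwise, `⟨x_u(t), w⟩ = ∫₀ᵗ ⟨Bᵀ Φ(t,s)ᵀ w, u(s)⟩ ds`, so by Cauchy–Schwarz its square is at most
`∫₀ᵗ wᵀ Φ(t,s) B Bᵀ Φ(t,s)ᵀ w ds · ∫₀ᵀ ‖u‖²`. Taking expectations and exchanging the order of
integration, the weak semigroup property replaces `Φ(t,s)` by `Φ(t-s)` in the expected kernel; after
`s ↦ t - s` this is the integral over `[0,t]` of the nonnegative function
`τ ↦ wᵀ E[Φ(τ) B Bᵀ Φ(τ)ᵀ] w`, which is at most its integral over `[0,T]`, namely `wᵀ P_{u,T} w`.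
-/

open MeasureTheory Matrix

attribute [local instance] Matrix.normedAddCommGroup Matrix.normedSpace

instance matrixContinuousENormOfNorm {m n : Type*} [Fintype m] [Fintype n] :
    ContinuousENorm (Matrix m n ℝ) :=
  SeminormedAddGroup.toContinuousENorm

section CauchySchwarz

variable {α : Type*} [MeasurableSpace α] {ν : Measure α}

theorem sq_integral_mul_le {f g : α → ℝ} (hf : MemLp f 2 ν) (hg : MemLp g 2 ν) :
    (∫ x, f x * g x ∂ν) ^ 2 ≤ (∫ x, f x ^ 2 ∂ν) * ∫ x, g x ^ 2 ∂ν := by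
  have inner_toLp {φ ψ : α → ℝ} (hφ : MemLp φ 2 ν) (hψ : MemLp ψ 2 ν) :
      inner ℝ (hφ.toLp φ) (hψ.toLp ψ) = ∫ x, φ x * ψ x ∂ν := by
    rw [L2.inner_def]
    refine integral_congr_ae ?_
    filter_upwards [hφ.coeFn_toLp, hψ.coeFn_toLp] with x hφx hψx
    rw [Real.inner_apply, hφx, hψx]
  simpa only [inner_toLp, ← sq] using real_inner_mul_inner_self_le (hf.toLp f) (hg.toLp g)

theorem sq_integral_dotProduct_le {ι : Type*} [Fintype ι] {f g : α → ι → ℝ}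
    (hf : Integrable (fun x => ∑ i, f x i ^ 2) ν) (hg : Integrable (fun x => ∑ i, g x i ^ 2) ν) :
    (∫ x, f x ⬝ᵥ g x ∂ν) ^ 2 ≤ (∫ x, ∑ i, f x i ^ 2 ∂ν) * ∫ x, ∑ i, g x i ^ 2 ∂ν := by
  have sqrt_memLp {φ : α → ℝ} (hφ : Integrable φ ν) (hφ0 : ∀ x, 0 ≤ φ x) :
      MemLp (fun x => √(φ x)) 2 ν :=
    (memLp_two_iff_integrable_sq
      (Real.continuous_sqrt.comp_aestronglyMeasurable hφ.aestronglyMeasurable)).2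
      (hφ.congr (.of_forall fun x => (Real.sq_sqrt (hφ0 x)).symm))
  have hF := sqrt_memLp hf fun x => by positivity
  have hG := sqrt_memLp hg fun x => by positivity
  have hFG : |∫ x, f x ⬝ᵥ g x ∂ν| ≤ ∫ x, √(∑ i, f x i ^ 2) * √(∑ i, g x i ^ 2) ∂ν := by
    rw [← Real.norm_eq_abs]
    refine norm_integral_le_of_norm_le (hF.integrable_mul hG) (.of_forall fun x => ?_)
    rw [Real.norm_eq_abs, ← Real.sqrt_mul (by positivity)]
    exact Real.abs_le_sqrt (Finset.sum_mul_sq_le_sq_mul_sq _ _ _)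
  calc (∫ x, f x ⬝ᵥ g x ∂ν) ^ 2
      ≤ (∫ x, √(∑ i, f x i ^ 2) * √(∑ i, g x i ^ 2) ∂ν) ^ 2 :=
        sq_le_sq.2 (hFG.trans (le_abs_self _))
    _ ≤ _ := sq_integral_mul_le hF hG
    _ = _ := by simp only [Real.sq_sqrt (Finset.sum_nonneg fun i _ => sq_nonneg _)]

end CauchySchwarz

section QuadraticForm

variable {ι κ : Type*} [Fintype ι] [Fintype κ]

theorem dotProduct_mul_transpose_mulVec (A : Matrix ι κ ℝ) (w : ι → ℝ) :
    w ⬝ᵥ (A * Aᵀ) *ᵥ w = ∑ j, (Aᵀ *ᵥ w) j ^ 2 := by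
  rw [← mulVec_mulVec, dotProduct_mulVec, ← mulVec_transpose]
  simp only [dotProduct, sq]

/- Used only through the lemmas below: its type carries `instTopologicalSpaceMatrix`, while the
Bochner-integral lemmas produce the topology of `Matrix.normedAddCommGroup`, which `rw` and `simp`
do not identify with it. -/
noncomputable def quadFormCLM (w : ι → ℝ) : Matrix ι ι ℝ →L[ℝ] ℝ :=
  LinearMap.toContinuousLinearMap
    { toFun := fun M => w ⬝ᵥ M *ᵥ w
      map_add' := fun M N => by rw [add_mulVec, dotProduct_add]
      map_smul' := fun c M => by rw [smul_mulVec, dotProduct_smul]; rfl }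

variable {β : Type*} [MeasurableSpace β] {μ : Measure β}

theorem MeasureTheory.Integrable.dotProduct_mulVec {f : β → Matrix ι ι ℝ} (hf : Integrable f μ)
    (w : ι → ℝ) :
    Integrable (fun y => w ⬝ᵥ f y *ᵥ w) μ :=
  (quadFormCLM w).integrable_comp hf

theorem integral_dotProduct_mulVec {f : β → Matrix ι ι ℝ} (hf : Integrable f μ) (w : ι → ℝ) :
    ∫ y, w ⬝ᵥ f y *ᵥ w ∂μ = w ⬝ᵥ (∫ y, f y ∂μ) *ᵥ w :=
  (quadFormCLM w).integral_comp_comm hf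

theorem dotProduct_integral_mul_transpose_mulVec_nonneg (A : β → Matrix ι κ ℝ) (w : ι → ℝ) :
    0 ≤ w ⬝ᵥ (∫ y, A y * (A y)ᵀ ∂μ) *ᵥ w := by
  by_cases hA : Integrable (fun y => A y * (A y)ᵀ) μ
  · rw [← integral_dotProduct_mulVec hA]
    exact integral_nonneg fun y => by
      simp only [dotProduct_mul_transpose_mulVec]; positivity
  · simp [integral_undef hA]

variable {α : Type*} [MeasurableSpace α] {ν : Measure α} [SFinite ν] [SFinite μ]

theorem integral_integral_dotProduct_mulVec_swap {f : α → β → Matrix ι ι ℝ}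
    (hf : Integrable (Function.uncurry f) (ν.prod μ)) (w : ι → ℝ) :
    ∫ y, ∫ x, w ⬝ᵥ f x y *ᵥ w ∂ν ∂μ = ∫ x, w ⬝ᵥ (∫ y, f x y ∂μ) *ᵥ w ∂ν := by
  rw [← integral_integral_swap (hf.dotProduct_mulVec w)]
  refine integral_congr_ae ?_
  filter_upwards [hf.prod_right_ae] with x hx
  exact integral_dotProduct_mulVec hx w

theorem integral_dotProduct_integral_mulVec {f : α → β → Matrix ι ι ℝ}
    (hf : Integrable (Function.uncurry f) (ν.prod μ)) (w : ι → ℝ) :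
    ∫ x, w ⬝ᵥ (∫ y, f x y ∂μ) *ᵥ w ∂ν = w ⬝ᵥ (∫ y, ∫ x, f x y ∂ν ∂μ) *ᵥ w := by
  have hf_right : Integrable (fun y => ∫ x, f x y ∂ν) μ := hf.integral_prod_right
  rw [← integral_integral_dotProduct_mulVec_swap hf, ← integral_dotProduct_mulVec hf_right]
  refine integral_congr_ae ?_
  filter_upwards [hf.prod_left_ae] with y hy
  exact integral_dotProduct_mulVec hy w

end QuadraticForm

theorem sq_integral_mulVec_dotProduct_le {α ι κ : Type*} [MeasurableSpace α] {ν : Measure α}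
    [Fintype ι] [Fintype κ] (K : α → Matrix ι κ ℝ) (u : α → κ → ℝ) (w : ι → ℝ)
    (hK : Integrable (fun x => w ⬝ᵥ (K x * (K x)ᵀ) *ᵥ w) ν)
    (hu : Integrable (fun x => ∑ i, u x i ^ 2) ν) :
    ((∫ x, K x *ᵥ u x ∂ν) ⬝ᵥ w) ^ 2 ≤
      (∫ x, w ⬝ᵥ (K x * (K x)ᵀ) *ᵥ w ∂ν) * ∫ x, ∑ i, u x i ^ 2 ∂ν := by
  simp only [dotProduct_mul_transpose_mulVec] at hK ⊢
  by_cases hKu : Integrable (fun x => K x *ᵥ u x) ν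
  · have hdot : (∫ x, K x *ᵥ u x ∂ν) ⬝ᵥ w = ∫ x, (K x)ᵀ *ᵥ w ⬝ᵥ u x ∂ν :=
      calc (∫ x, K x *ᵥ u x ∂ν) ⬝ᵥ w = w ⬝ᵥ ∫ x, K x *ᵥ u x ∂ν := dotProduct_comm _ _
        _ = ∫ x, w ⬝ᵥ K x *ᵥ u x ∂ν :=
            ((LinearMap.toContinuousLinearMap (dotProductBilin ℝ ℝ w)).integral_comp_comm hKu).symm
        _ = ∫ x, (K x)ᵀ *ᵥ w ⬝ᵥ u x ∂ν := by simp only [dotProduct_mulVec, mulVec_transpose]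
    exact hdot ▸ sq_integral_dotProduct_le hK hu
  · rw [integral_undef hKu, zero_dotProduct, sq, zero_mul]
    positivity

theorem integral_sq_integral_mulVec_dotProduct_le {α β ι κ : Type*} [MeasurableSpace α]
    [MeasurableSpace β] {ν : Measure α} {μ : Measure β} [SFinite ν] [SFinite μ]
    [Fintype ι] [Fintype κ] (K : α → β → Matrix ι κ ℝ) (u : α → κ → ℝ) (w : ι → ℝ)
    (hK : Integrable (fun p : α × β => K p.1 p.2 * (K p.1 p.2)ᵀ) (ν.prod μ))
    (hu : Integrable (fun x => ∑ i, u x i ^ 2) ν) :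
    ∫ y, ((∫ x, K x y *ᵥ u x ∂ν) ⬝ᵥ w) ^ 2 ∂μ ≤
      (∫ x, w ⬝ᵥ (∫ y, K x y * (K x y)ᵀ ∂μ) *ᵥ w ∂ν) * ∫ x, ∑ i, u x i ^ 2 ∂ν := by
  rw [← integral_integral_dotProduct_mulVec_swap hK, ← integral_mul_const]
  refine integral_mono_of_nonneg (.of_forall fun y => sq_nonneg _)
    ((hK.dotProduct_mulVec w).integral_prod_right.mul_const _) ?_
  filter_upwards [hK.prod_left_ae] with y hy
  exact sq_integral_mulVec_dotProduct_le _ _ w (hy.dotProduct_mulVec w) hu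

theorem setIntegral_Icc_zero_mono {f : ℝ → ℝ} {t T : ℝ} (hf : IntegrableOn f (Set.Icc 0 T))
    (hf0 : ∀ x, 0 ≤ f x) (htT : t ≤ T) :
    ∫ x in Set.Icc 0 t, f x ≤ ∫ x in Set.Icc 0 T, f x :=
  setIntegral_mono_set hf (.of_forall hf0) (Set.Icc_subset_Icc_right htT).eventuallyLE

theorem setIntegral_Icc_zero_comp_sub_left {E : Type*} [NormedAddCommGroup E] [NormedSpace ℝ E]
    (q : ℝ → E) {t : ℝ} (ht : 0 ≤ t) :
    ∫ s in Set.Icc 0 t, q (t - s) = ∫ s in Set.Icc 0 t, q s := by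
  simp only [integral_Icc_eq_integral_Ioc, ← intervalIntegral.integral_of_le ht,
    intervalIntegral.integral_comp_sub_left, sub_self, sub_zero]

theorem gramian_dominant_subspace_control_general
    {n m : ℕ} {Ω : Type*} [MeasurableSpace Ω] (μ : Measure Ω) [IsProbabilityMeasure μ]
    (T : ℝ)
    (Φ : ℝ → ℝ → Ω → Matrix (Fin n) (Fin n) ℝ)  -- Φ t s ω, defined for 0 ≤ s ≤ t ≤ T
    (B : Matrix (Fin n) (Fin m) ℝ)
    (u : ℝ → Fin m → ℝ)
    (hu : IntegrableOn (fun s => ∑ i, u s i ^ 2) (Set.Icc (0 : ℝ) T))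
    (hsemi : ∀ s t : ℝ, 0 ≤ s → s ≤ t → t ≤ T →
      (∫ ω, Φ t s ω * B * Bᵀ * (Φ t s ω)ᵀ ∂μ)
        = ∫ ω, Φ (t - s) 0 ω * B * Bᵀ * (Φ (t - s) 0 ω)ᵀ ∂μ)
    (hint : Integrable (fun p : ℝ × Ω => Φ p.1 0 p.2 * B * Bᵀ * (Φ p.1 0 p.2)ᵀ)
      ((volume.restrict (Set.Icc 0 T)).prod μ))
    (hint2 : ∀ t ∈ Set.Icc (0 : ℝ) T,
      Integrable (fun p : ℝ × Ω => Φ t p.1 p.2 * B * Bᵀ * (Φ t p.1 p.2)ᵀ)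
        ((volume.restrict (Set.Icc 0 t)).prod μ))
    (xu : ℝ → Ω → Fin n → ℝ)
    (hxu : ∀ t ω, xu t ω = ∫ s in Set.Icc (0 : ℝ) t, Φ t s ω *ᵥ (B *ᵥ u s))
    (P : Matrix (Fin n) (Fin n) ℝ)
    (hP : P = ∫ ω, (∫ s in Set.Icc (0 : ℝ) T, Φ s 0 ω * B * Bᵀ * (Φ s 0 ω)ᵀ) ∂μ)
    (w : Fin n → ℝ) (t : ℝ) (ht : t ∈ Set.Icc (0 : ℝ) T) :
    (∫ ω, (xu t ω ⬝ᵥ w) ^ 2 ∂μ)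
      ≤ (w ⬝ᵥ P *ᵥ w) * ∫ s in Set.Icc (0 : ℝ) T, ∑ i, u s i ^ 2 := by
  obtain ⟨ht0, htT⟩ := ht
  have hfactor (M : Matrix (Fin n) (Fin n) ℝ) : M * B * Bᵀ * Mᵀ = (M * B) * (M * B)ᵀ := by
    rw [transpose_mul, ← Matrix.mul_assoc]
  set q : ℝ → ℝ := fun τ => w ⬝ᵥ (∫ ω, Φ τ 0 ω * B * Bᵀ * (Φ τ 0 ω)ᵀ ∂μ) *ᵥ w
  have hq0 (τ : ℝ) : 0 ≤ q τ := by
    simpa only [q, hfactor] using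
      dotProduct_integral_mul_transpose_mulVec_nonneg (μ := μ) (fun ω => Φ τ 0 ω * B) w
  have hq : IntegrableOn q (Set.Icc 0 T) :=
    (hint.integral_prod_left : Integrable (fun τ => ∫ ω, Φ τ 0 ω * B * Bᵀ * (Φ τ 0 ω)ᵀ ∂μ)
      (volume.restrict (Set.Icc 0 T))).dotProduct_mulVec w
  calc ∫ ω, (xu t ω ⬝ᵥ w) ^ 2 ∂μ
      ≤ (∫ s in Set.Icc 0 t, w ⬝ᵥ (∫ ω, Φ t s ω * B * Bᵀ * (Φ t s ω)ᵀ ∂μ) *ᵥ w) *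
          ∫ s in Set.Icc 0 t, ∑ i, u s i ^ 2 := by
        simpa only [hxu, mulVec_mulVec, ← hfactor] using
          integral_sq_integral_mulVec_dotProduct_le (fun s ω => Φ t s ω * B) u w
            (by simpa only [hfactor] using hint2 t ⟨ht0, htT⟩)
            (hu.mono_set (Set.Icc_subset_Icc_right htT))
    _ = (∫ s in Set.Icc 0 t, q (t - s)) * ∫ s in Set.Icc 0 t, ∑ i, u s i ^ 2 := by
        congr 1
        refine setIntegral_congr_fun measurableSet_Icc fun s hs => ?_
        rw [hsemi s t hs.1 hs.2 htT]
    _ = (∫ τ in Set.Icc 0 t, q τ) * ∫ s in Set.Icc 0 t, ∑ i, u s i ^ 2 := by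
        rw [setIntegral_Icc_zero_comp_sub_left q ht0]
    _ ≤ (∫ τ in Set.Icc 0 T, q τ) * ∫ s in Set.Icc 0 T, ∑ i, u s i ^ 2 :=
        mul_le_mul (setIntegral_Icc_zero_mono hq hq0 htT)
          (setIntegral_Icc_zero_mono hu (fun s => by positivity) htT) (by positivity)
          (setIntegral_nonneg measurableSet_Icc fun τ _ => hq0 τ)
    _ = (w ⬝ᵥ P *ᵥ w) * ∫ s in Set.Icc 0 T, ∑ i, u s i ^ 2 := by
        rw [hP, ← integral_dotProduct_integral_mulVec
          (f := fun s ω => Φ s 0 ω * B * Bᵀ * (Φ s 0 ω)ᵀ) hint]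

/-- Let `Φ(t,s)` be the two-parameter fundamental solution process (with `Φ(τ) := Φ(τ,0)`)
satisfying the weak semigroup property in second moments
`E[Φ(t,s) B Bᵀ Φ(t,s)ᵀ] = E[Φ(t−s) B Bᵀ Φ(t−s)ᵀ]` for `0 ≤ s ≤ t ≤ T`.  For a deterministic
square-integrable control `u`, the controlled solution `x_u(t) = ∫₀ᵗ Φ(t,s) B u(s) ds` and the
reachability Gramian `P_{u,T} = E[∫₀ᵀ Φ(s) B Bᵀ Φ(s)ᵀ ds]` satisfy
`E[⟨x_u(t), w⟩²] ≤ (wᵀ P_{u,T} w) ∫₀ᵀ ‖u(s)‖₂² ds` for all `w` and all `t ∈ [0,T]`. -/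
theorem gramian_dominant_subspace_control
    {n m : ℕ} {Ω : Type*} [MeasurableSpace Ω] (μ : Measure Ω) [IsProbabilityMeasure μ]
    (T : ℝ) (hT : 0 < T)
    (Φ : ℝ → ℝ → Ω → Matrix (Fin n) (Fin n) ℝ)  -- Φ t s ω, defined for 0 ≤ s ≤ t ≤ T
    (B : Matrix (Fin n) (Fin m) ℝ)
    (u : ℝ → Fin m → ℝ)
    (hu : IntegrableOn (fun s => ∑ i, u s i ^ 2) (Set.Icc (0 : ℝ) T))
    (hsemi : ∀ s t : ℝ, 0 ≤ s → s ≤ t → t ≤ T →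
      (∫ ω, Φ t s ω * B * Bᵀ * (Φ t s ω)ᵀ ∂μ)
        = ∫ ω, Φ (t - s) 0 ω * B * Bᵀ * (Φ (t - s) 0 ω)ᵀ ∂μ)
    (hint : Integrable (fun p : ℝ × Ω => Φ p.1 0 p.2 * B * Bᵀ * (Φ p.1 0 p.2)ᵀ)
      ((volume.restrict (Set.Icc 0 T)).prod μ))
    (hint2 : ∀ t ∈ Set.Icc (0 : ℝ) T,
      Integrable (fun p : ℝ × Ω => Φ t p.1 p.2 * B * Bᵀ * (Φ t p.1 p.2)ᵀ)
        ((volume.restrict (Set.Icc 0 t)).prod μ))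
    (xu : ℝ → Ω → Fin n → ℝ)
    (hxu : ∀ t ω, xu t ω = ∫ s in Set.Icc (0 : ℝ) t, Φ t s ω *ᵥ (B *ᵥ u s))
    (P : Matrix (Fin n) (Fin n) ℝ)
    (hP : P = ∫ ω, (∫ s in Set.Icc (0 : ℝ) T, Φ s 0 ω * B * Bᵀ * (Φ s 0 ω)ᵀ) ∂μ)
    (w : Fin n → ℝ) (t : ℝ) (ht : t ∈ Set.Icc (0 : ℝ) T) :
    (∫ ω, (xu t ω ⬝ᵥ w) ^ 2 ∂μ)
      ≤ (w ⬝ᵥ P *ᵥ w) * ∫ s in Set.Icc (0 : ℝ) T, ∑ i, u s i ^ 2 :=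
  gramian_dominant_subspace_control_general μ T Φ B u hu hsemi hint hint2 xu hxu P hP w t ht
end

section
/- Let n, r, m, p, q ∈ ℕ, Ã ∈ ℝ^{n×n}, Â ∈ ℝ^{r×r}, Ñ₁, …, Ñ_q ∈ ℝ^{n×n}, N̂₁, …, N̂_q ∈ ℝ^{r×r}, B̃ ∈ ℝ^{n×m}, B₁ ∈ ℝ^{r×m}, C̃ ∈ ℝ^{p×n}, C₁ ∈ ℝ^{p×r}. Suppose P̂ ∈ ℝ^{n×r} satisfies Ã P̂ + P̂ Âᵀ + Σ_{i=1}^q Ñᵢ P̂ N̂ᵢᵀ = −B̃ B₁ᵀ and Q̂ ∈ ℝ^{r×n} satisfies Âᵀ Q̂ + Q̂ Ã + Σ_{i=1}^q N̂ᵢᵀ Q̂ Ñᵢ = −C₁ᵀ C̃. Then trace(C̃ P̂ C₁ᵀ) = trace(Q̂ B̃ B₁ᵀ). -/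
/-!
By cyclicity of the trace, the operator `L* Y = Âᵀ Y + Y Ã + Σᵢ N̂ᵢᵀ Y Ñᵢ` of the `Q̂`-equation
is the adjoint of the operator `L X = Ã X + X Âᵀ + Σᵢ Ñᵢ X N̂ᵢᵀ` of the `P̂`-equation for the
pairing `⟨Y, X⟩ = tr (Y X)`. Hence
`tr (C̃ P̂ C₁ᵀ) = tr (C₁ᵀ C̃ P̂) = -⟨L* Q̂, P̂⟩ = -⟨Q̂, L P̂⟩ = tr (Q̂ B̃ B₁ᵀ)`.
-/

open Matrix

section GeneralizedSylvester

variable {R : Type*} [CommSemiring R]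

theorem trace_transpose_mul_mul_mul_eq {k l a b : Type*} [Fintype k] [Fintype l] [Fintype a]
    [Fintype b] (M : Matrix k l R) (Y : Matrix k a R) (N : Matrix a b R) (X : Matrix b l R) :
    (Mᵀ * Y * N * X).trace = (Y * (N * X * Mᵀ)).trace := by
  rw [Matrix.mul_assoc, Matrix.mul_assoc, trace_mul_comm, Matrix.mul_assoc]

theorem trace_generalizedSylvester_adjoint_mul {ι n r : Type*} [Fintype ι] [Fintype n]
    [Fintype r] (A : Matrix n n R) (B : Matrix r r R) (N : ι → Matrix n n R)
    (M : ι → Matrix r r R) (X : Matrix n r R) (Y : Matrix r n R) :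
    ((Bᵀ * Y + Y * A + ∑ i, (M i)ᵀ * Y * N i) * X).trace
      = (Y * (A * X + X * Bᵀ + ∑ i, N i * X * (M i)ᵀ)).trace := by
  have hB : (Bᵀ * Y * X).trace = (Y * (X * Bᵀ)).trace := by
    rw [Matrix.mul_assoc, trace_mul_comm, Matrix.mul_assoc]
  rw [Matrix.add_mul, Matrix.add_mul, Matrix.mul_add, Matrix.mul_add, trace_add, trace_add,
    trace_add, trace_add, Matrix.sum_mul, Matrix.mul_sum, trace_sum, trace_sum, hB,
    Matrix.mul_assoc Y A X, add_comm (Y * (X * Bᵀ)).trace]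
  congr 1
  exact Finset.sum_congr rfl fun i _ => trace_transpose_mul_mul_mul_eq _ _ _ _

end GeneralizedSylvester

/-- Trace identity for the mixed Gramians of a full-order system (coefficients
`Ã, Ñᵢ, B̃, C̃`) and a reduced-order system (coefficients `Â, N̂ᵢ, B₁, C₁`): if
`Ã P̂ + P̂ Âᵀ + Σᵢ Ñᵢ P̂ N̂ᵢᵀ = −B̃ B₁ᵀ` and `Âᵀ Q̂ + Q̂ Ã + Σᵢ N̂ᵢᵀ Q̂ Ñᵢ = −C₁ᵀ C̃`, then
`trace(C̃ P̂ C₁ᵀ) = trace(Q̂ B̃ B₁ᵀ)`. -/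
theorem mixed_gramian_trace_identity
    {n r m p q : ℕ}
    (Atil : Matrix (Fin n) (Fin n) ℝ) (Ahat : Matrix (Fin r) (Fin r) ℝ)
    (Ntil : Fin q → Matrix (Fin n) (Fin n) ℝ) (Nhat : Fin q → Matrix (Fin r) (Fin r) ℝ)
    (Btil : Matrix (Fin n) (Fin m) ℝ) (B₁ : Matrix (Fin r) (Fin m) ℝ)
    (Ctil : Matrix (Fin p) (Fin n) ℝ) (C₁ : Matrix (Fin p) (Fin r) ℝ)
    (Phat : Matrix (Fin n) (Fin r) ℝ) (Qhat : Matrix (Fin r) (Fin n) ℝ)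
    (hPhat : Atil * Phat + Phat * Ahatᵀ + ∑ i, Ntil i * Phat * (Nhat i)ᵀ = -(Btil * B₁ᵀ))
    (hQhat : Ahatᵀ * Qhat + Qhat * Atil + ∑ i, (Nhat i)ᵀ * Qhat * Ntil i = -(C₁ᵀ * Ctil)) :
    (Ctil * Phat * C₁ᵀ).trace = (Qhat * Btil * B₁ᵀ).trace := by
  calc (Ctil * Phat * C₁ᵀ).trace
      = (C₁ᵀ * Ctil * Phat).trace := trace_mul_cycle _ _ _
    _ = -((Ahatᵀ * Qhat + Qhat * Atil + ∑ i, (Nhat i)ᵀ * Qhat * Ntil i) * Phat).trace := by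
      rw [hQhat, Matrix.neg_mul, trace_neg, neg_neg]
    _ = -(Qhat * (Atil * Phat + Phat * Ahatᵀ + ∑ i, Ntil i * Phat * (Nhat i)ᵀ)).trace := by
      rw [trace_generalizedSylvester_adjoint_mul]
    _ = (Qhat * Btil * B₁ᵀ).trace := by
      rw [hPhat, Matrix.mul_neg, trace_neg, neg_neg, Matrix.mul_assoc]
end

section
/- Let r, p, q ∈ ℕ, A, N₁, …, N_q ∈ ℝ^{r×r}, C ∈ ℝ^{p×r}, and D, Q, R ∈ ℝ^{r×r}. Suppose Aᵀ Q + Q A + Σ_{i=1}^q Nᵢᵀ Q Nᵢ = −Cᵀ C and A D + D Aᵀ + Σ_{i=1}^q Nᵢ D Nᵢᵀ = R. Then trace(C D Cᵀ) = −trace(Q R). -/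
open Matrix

/-! The operators `X ↦ A X + X Aᵀ + Σᵢ Nᵢ X Nᵢᵀ` and `Y ↦ Aᵀ Y + Y A + Σᵢ Nᵢᵀ Y Nᵢ` are
adjoint for the pairing `⟨Y, X⟩ = trace (Y X)`, by cyclicity of the trace. Pairing the equation
for `Q` with `D` and the equation for `D` with `Q` then yields the identity, since
`trace (C D Cᵀ) = trace (Cᵀ C D)`. -/

section LyapunovOperators

variable {n ι α : Type*} [Fintype n] [Fintype ι] [CommRing α]

def reachabilityLyapunovOp (A : Matrix n n α) (N : ι → Matrix n n α) (X : Matrix n n α) :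
    Matrix n n α :=
  A * X + X * Aᵀ + ∑ i, N i * X * (N i)ᵀ

def observabilityLyapunovOp (A : Matrix n n α) (N : ι → Matrix n n α) (Y : Matrix n n α) :
    Matrix n n α :=
  Aᵀ * Y + Y * A + ∑ i, (N i)ᵀ * Y * N i

theorem trace_observabilityLyapunovOp_mul (A : Matrix n n α) (N : ι → Matrix n n α)
    (X Y : Matrix n n α) :
    (observabilityLyapunovOp A N Y * X).trace = (Y * reachabilityLyapunovOp A N X).trace := by
  have hA : (Aᵀ * Y * X).trace = (Y * (X * Aᵀ)).trace := by
    rw [Matrix.mul_assoc, trace_mul_comm, Matrix.mul_assoc]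
  have hN : ∀ i, ((N i)ᵀ * Y * N i * X).trace = (Y * (N i * X * (N i)ᵀ)).trace := fun i => by
    simp only [Matrix.mul_assoc]
    rw [trace_mul_comm]
    simp only [Matrix.mul_assoc]
  simp only [observabilityLyapunovOp, reachabilityLyapunovOp, Matrix.add_mul, Matrix.mul_add,
    Finset.sum_mul, Finset.mul_sum, trace_add, trace_sum, hA, hN, Matrix.mul_assoc Y A X]
  ring

end LyapunovOperators

/-- Trace duality for generalized Lyapunov equations: if
`Aᵀ Q + Q A + Σᵢ Nᵢᵀ Q Nᵢ = −Cᵀ C` and `A D + D Aᵀ + Σᵢ Nᵢ D Nᵢᵀ = R`, then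
`trace(C D Cᵀ) = −trace(Q R)`. -/
theorem lyapunov_trace_duality
    {r p q : ℕ}
    (A : Matrix (Fin r) (Fin r) ℝ) (N : Fin q → Matrix (Fin r) (Fin r) ℝ)
    (C : Matrix (Fin p) (Fin r) ℝ) (D Q R : Matrix (Fin r) (Fin r) ℝ)
    (hQ : Aᵀ * Q + Q * A + ∑ i, (N i)ᵀ * Q * N i = -(Cᵀ * C))
    (hD : A * D + D * Aᵀ + ∑ i, N i * D * (N i)ᵀ = R) :
    (C * D * Cᵀ).trace = -(Q * R).trace := by
  have hQ' : observabilityLyapunovOp A N Q = -(Cᵀ * C) := hQ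
  have hD' : reachabilityLyapunovOp A N D = R := hD
  calc (C * D * Cᵀ).trace = (Cᵀ * C * D).trace := trace_mul_cycle C D Cᵀ
    _ = -(observabilityLyapunovOp A N Q * D).trace := by
      rw [hQ', Matrix.neg_mul, trace_neg, neg_neg]
    _ = -(Q * R).trace := by rw [trace_observabilityLyapunovOp_mul, hD']
end

section
/- Let n = r + s and partition Ã_N ∈ ℝ^{n×n} into blocks A_{N,11} ∈ ℝ^{r×r}, A_{N,12} ∈ ℝ^{r×s}, A_{N,21} ∈ ℝ^{s×r}, A_{N,22} ∈ ℝ^{s×s}, and similarly partition Ñᵢ ∈ ℝ^{n×n} into blocks N_{i,11}, N_{i,12}, N_{i,21}, N_{i,22} for i = 1, …, q, and B̃ ∈ ℝ^{n×m} into B₁ ∈ ℝ^{r×m}, B₂ ∈ ℝ^{s×m}. Let Δ := Σ_{i=1}^q N_{i,12} N_{i,21} ∈ ℝ^{r×r}. Suppose the block-diagonal matrix Σ = diag(Σ₁, Σ₂), with Σ₁ ∈ ℝ^{r×r} and Σ₂ ∈ ℝ^{s×s}, satisfies the generalized Lyapunov equation Ã_N Σ + Σ Ã_Nᵀ + Σ_{i=1}^q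 Ñᵢ Σ Ñᵢᵀ = −B̃ B̃ᵀ, and suppose P_r ∈ ℝ^{r×r} satisfies (A_{N,11} − ½Δ) P_r + P_r (A_{N,11} − ½Δ)ᵀ + Σ_{i=1}^q N_{i,11} P_r N_{i,11}ᵀ = −B₁ B₁ᵀ. Then the difference D := P_r − Σ₁ satisfies (A_{N,11} − ½Δ) D + D (A_{N,11} − ½Δ)ᵀ + Σ_{i=1}^q N_{i,11} D N_{i,11}ᵀ = Σ_{i=1}^q N_{i,12} Σ₂ N_{i,12}ᵀ + ½ Δ Σ₁ + ½ Σ₁ Δᵀ. -/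
/-! The `(1,1)` block of the full Lyapunov equation with block-diagonal `Σ` reads
`A₁₁ Σ₁ + Σ₁ A₁₁ᵀ + ∑ᵢ N_{i,11} Σ₁ N_{i,11}ᵀ + ∑ᵢ N_{i,12} Σ₂ N_{i,12}ᵀ = -B₁ B₁ᵀ`.
The generalized Lyapunov operator is linear in its argument and affine in the drift, so
subtracting this block equation from the reduced one leaves exactly the coupling term
`∑ᵢ N_{i,12} Σ₂ N_{i,12}ᵀ` and the Itô–Stratonovich correction `½ (Δ Σ₁ + Σ₁ Δᵀ)`. -/

open Matrix

namespace Matrix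

variable {R ι n n₁ n₂ m₁ m₂ : Type*} [Fintype ι]

lemma toBlocks₁₁_add [Add R] (X Y : Matrix (n₁ ⊕ n₂) (m₁ ⊕ m₂) R) :
    (X + Y).toBlocks₁₁ = X.toBlocks₁₁ + Y.toBlocks₁₁ := rfl

lemma toBlocks₁₁_neg [Neg R] (X : Matrix (n₁ ⊕ n₂) (m₁ ⊕ m₂) R) :
    (-X).toBlocks₁₁ = -X.toBlocks₁₁ := rfl

lemma toBlocks₁₁_sum [AddCommMonoid R] (f : ι → Matrix (n₁ ⊕ n₂) (m₁ ⊕ m₂) R) :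
    (∑ i, f i).toBlocks₁₁ = ∑ i, (f i).toBlocks₁₁ := by
  ext
  simp [toBlocks₁₁, sum_apply]

variable [CommRing R]

lemma toBlocks₁₁_fromRows_mul_transpose {m : Type*} [Fintype m] (B₁ : Matrix n₁ m R)
    (B₂ : Matrix n₂ m R) : (fromRows B₁ B₂ * (fromRows B₁ B₂)ᵀ).toBlocks₁₁ = B₁ * B₁ᵀ := by
  rw [transpose_fromRows, fromRows_mul_fromCols, toBlocks_fromBlocks₁₁]

variable [Fintype n]

def lyapunovMap (A : Matrix n n R) (N : ι → Matrix n n R) (X : Matrix n n R) : Matrix n n R :=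
  A * X + X * Aᵀ + ∑ i, N i * X * (N i)ᵀ

lemma lyapunovMap_sub (A : Matrix n n R) (N : ι → Matrix n n R) (X Y : Matrix n n R) :
    lyapunovMap A N (X - Y) = lyapunovMap A N X - lyapunovMap A N Y := by
  simp only [lyapunovMap, mul_sub, sub_mul, Finset.sum_sub_distrib]
  abel

lemma lyapunovMap_sub_smul (A Δ : Matrix n n R) (c : R) (N : ι → Matrix n n R)
    (X : Matrix n n R) :
    lyapunovMap (A - c • Δ) N X = lyapunovMap A N X - c • (Δ * X) - c • (X * Δᵀ) := by
  simp only [lyapunovMap, sub_mul, mul_sub, transpose_sub, transpose_smul, Matrix.smul_mul,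
    Matrix.mul_smul]
  abel

variable [Fintype n₁] [Fintype n₂]

lemma toBlocks₁₁_lyapunovMap_fromBlocks_diag (A₁₁ : Matrix n₁ n₁ R) (A₁₂ : Matrix n₁ n₂ R)
    (A₂₁ : Matrix n₂ n₁ R) (A₂₂ : Matrix n₂ n₂ R) (N₁₁ : ι → Matrix n₁ n₁ R)
    (N₁₂ : ι → Matrix n₁ n₂ R) (N₂₁ : ι → Matrix n₂ n₁ R) (N₂₂ : ι → Matrix n₂ n₂ R)
    (S₁ : Matrix n₁ n₁ R) (S₂ : Matrix n₂ n₂ R) :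
    (lyapunovMap (fromBlocks A₁₁ A₁₂ A₂₁ A₂₂)
        (fun i ↦ fromBlocks (N₁₁ i) (N₁₂ i) (N₂₁ i) (N₂₂ i)) (fromBlocks S₁ 0 0 S₂)).toBlocks₁₁
      = lyapunovMap A₁₁ N₁₁ S₁ + ∑ i, N₁₂ i * S₂ * (N₁₂ i)ᵀ := by
  simp only [lyapunovMap, fromBlocks_transpose, fromBlocks_multiply, toBlocks₁₁_sum,
    toBlocks₁₁_add, toBlocks_fromBlocks₁₁, Matrix.mul_zero, Matrix.zero_mul, add_zero, zero_add,
    Finset.sum_add_distrib]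
  abel

end Matrix

theorem reduced_gramian_difference_equation_general
    {r s m q : ℕ}
    (A11 : Matrix (Fin r) (Fin r) ℝ) (A12 : Matrix (Fin r) (Fin s) ℝ)
    (A21 : Matrix (Fin s) (Fin r) ℝ) (A22 : Matrix (Fin s) (Fin s) ℝ)
    (N11 : Fin q → Matrix (Fin r) (Fin r) ℝ) (N12 : Fin q → Matrix (Fin r) (Fin s) ℝ)
    (N21 : Fin q → Matrix (Fin s) (Fin r) ℝ) (N22 : Fin q → Matrix (Fin s) (Fin s) ℝ)
    (B₁ : Matrix (Fin r) (Fin m) ℝ) (B₂ : Matrix (Fin s) (Fin m) ℝ)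
    (Sig1 : Matrix (Fin r) (Fin r) ℝ) (Sig2 : Matrix (Fin s) (Fin s) ℝ)
    (Pr : Matrix (Fin r) (Fin r) ℝ)
    (Δ : Matrix (Fin r) (Fin r) ℝ)
    (hSig : (fromBlocks A11 A12 A21 A22) * (fromBlocks Sig1 0 0 Sig2)
        + (fromBlocks Sig1 0 0 Sig2) * (fromBlocks A11 A12 A21 A22)ᵀ
        + ∑ i, (fromBlocks (N11 i) (N12 i) (N21 i) (N22 i)) * (fromBlocks Sig1 0 0 Sig2)
            * (fromBlocks (N11 i) (N12 i) (N21 i) (N22 i))ᵀ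
        = -((fromRows B₁ B₂) * (fromRows B₁ B₂)ᵀ))
    (hPr : (A11 - (1/2 : ℝ) • Δ) * Pr + Pr * (A11 - (1/2 : ℝ) • Δ)ᵀ
        + ∑ i, N11 i * Pr * (N11 i)ᵀ = -(B₁ * B₁ᵀ)) :
    (A11 - (1/2 : ℝ) • Δ) * (Pr - Sig1) + (Pr - Sig1) * (A11 - (1/2 : ℝ) • Δ)ᵀ
        + ∑ i, N11 i * (Pr - Sig1) * (N11 i)ᵀ
      = (∑ i, N12 i * Sig2 * (N12 i)ᵀ)
        + (1/2 : ℝ) • (Δ * Sig1) + (1/2 : ℝ) • (Sig1 * Δᵀ) := by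
  change lyapunovMap _ (fun i ↦ fromBlocks (N11 i) (N12 i) (N21 i) (N22 i)) _ = _ at hSig
  change lyapunovMap _ N11 Pr = _ at hPr
  change lyapunovMap _ N11 (Pr - Sig1) = _
  have hSig₁₁ := congrArg toBlocks₁₁ hSig
  rw [toBlocks₁₁_lyapunovMap_fromBlocks_diag, toBlocks₁₁_neg,
    toBlocks₁₁_fromRows_mul_transpose] at hSig₁₁
  rw [lyapunovMap_sub, hPr, lyapunovMap_sub_smul, ← hSig₁₁]
  abel

/-- Comparison of the reduced Gramian `P_r` with the retained block `Σ₁` of the balanced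
full-order Gramian `Σ = diag(Σ₁, Σ₂)` for projection-based reduced Stratonovich systems:
if `Ã_N Σ + Σ Ã_Nᵀ + Σᵢ Ñᵢ Σ Ñᵢᵀ = −B̃ B̃ᵀ` (with the block partitions of `Ã_N`, `Ñᵢ`, `B̃`)
and `(A_{N,11} − ½Δ) P_r + P_r (A_{N,11} − ½Δ)ᵀ + Σᵢ N_{i,11} P_r N_{i,11}ᵀ = −B₁ B₁ᵀ` where
`Δ = Σᵢ N_{i,12} N_{i,21}`, then `D = P_r − Σ₁` satisfies
`(A_{N,11} − ½Δ) D + D (A_{N,11} − ½Δ)ᵀ + Σᵢ N_{i,11} D N_{i,11}ᵀ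
  = Σᵢ N_{i,12} Σ₂ N_{i,12}ᵀ + ½ Δ Σ₁ + ½ Σ₁ Δᵀ`. -/
theorem reduced_gramian_difference_equation
    {r s m q : ℕ}
    (A11 : Matrix (Fin r) (Fin r) ℝ) (A12 : Matrix (Fin r) (Fin s) ℝ)
    (A21 : Matrix (Fin s) (Fin r) ℝ) (A22 : Matrix (Fin s) (Fin s) ℝ)
    (N11 : Fin q → Matrix (Fin r) (Fin r) ℝ) (N12 : Fin q → Matrix (Fin r) (Fin s) ℝ)
    (N21 : Fin q → Matrix (Fin s) (Fin r) ℝ) (N22 : Fin q → Matrix (Fin s) (Fin s) ℝ)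
    (B₁ : Matrix (Fin r) (Fin m) ℝ) (B₂ : Matrix (Fin s) (Fin m) ℝ)
    (Sig1 : Matrix (Fin r) (Fin r) ℝ) (Sig2 : Matrix (Fin s) (Fin s) ℝ)
    (Pr : Matrix (Fin r) (Fin r) ℝ)
    (Δ : Matrix (Fin r) (Fin r) ℝ) (hΔ : Δ = ∑ i, N12 i * N21 i)
    (hSig : (fromBlocks A11 A12 A21 A22) * (fromBlocks Sig1 0 0 Sig2)
        + (fromBlocks Sig1 0 0 Sig2) * (fromBlocks A11 A12 A21 A22)ᵀ
        + ∑ i, (fromBlocks (N11 i) (N12 i) (N21 i) (N22 i)) * (fromBlocks Sig1 0 0 Sig2)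
            * (fromBlocks (N11 i) (N12 i) (N21 i) (N22 i))ᵀ
        = -((fromRows B₁ B₂) * (fromRows B₁ B₂)ᵀ))
    (hPr : (A11 - (1/2 : ℝ) • Δ) * Pr + Pr * (A11 - (1/2 : ℝ) • Δ)ᵀ
        + ∑ i, N11 i * Pr * (N11 i)ᵀ = -(B₁ * B₁ᵀ)) :
    (A11 - (1/2 : ℝ) • Δ) * (Pr - Sig1) + (Pr - Sig1) * (A11 - (1/2 : ℝ) • Δ)ᵀ
        + ∑ i, N11 i * (Pr - Sig1) * (N11 i)ᵀ
      = (∑ i, N12 i * Sig2 * (N12 i)ᵀ)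
        + (1/2 : ℝ) • (Δ * Sig1) + (1/2 : ℝ) • (Sig1 * Δᵀ) :=
  reduced_gramian_difference_equation_general A11 A12 A21 A22 N11 N12 N21 N22 B₁ B₂ Sig1 Sig2 Pr Δ
    hSig hPr
end
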